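/- arXiv:2604.25917 — 3 statements merged into one kernel-verified Lean document; each statement's English description precedes it below -/
import Mathlib

section
/- For every probability vector p : Fin n → ℝ, the spectral norm of S(p) = diagonal(p) − p pᵀ satisfies ‖S(p)‖₂ ≤ 1 − ∑ i, (p i)^2. -/
/-!
Since `S(p)` is positive semidefinite, its spectral norm is the largest value of its quadratic
form `x ↦ ∑ pᵢ xᵢ² - (∑ pᵢ xᵢ)²` on the unit sphere. Dropping the off-diagonal terms of
`∑ᵢⱼ pᵢ pⱼ (xᵢ + xⱼ)² = 2 (∑ pᵢ xᵢ² + (∑ pᵢ xᵢ)²)` bounds this weighted variance by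
`∑ 2 pᵢ (1 - pᵢ) xᵢ²`, and `2 pᵢ (1 - pᵢ) ≤ 1 - ∑ pⱼ²` because `∑_{j ≠ i} pⱼ² ≤ (1 - pᵢ)²`.
-/

/-- The spectral norm of a real matrix: the operator norm of the induced
linear map between Euclidean spaces. -/
noncomputable def matrixSpectralNorm {m n : ℕ} (A : Matrix (Fin m) (Fin n) ℝ) : ℝ :=
  ‖LinearMap.toContinuousLinearMap (Matrix.toEuclideanLin A)‖

open Finset Matrix RCLike

theorem ContinuousLinearMap.norm_le_of_abs_re_inner_self_le {𝕜 E : Type*} [RCLike 𝕜]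
    [NormedAddCommGroup E] [InnerProductSpace 𝕜 E] {T : E →L[𝕜] E}
    (hT : (T : E →ₗ[𝕜] E).IsSymmetric) {C : ℝ} (hC : 0 ≤ C)
    (h : ∀ x, |re (inner 𝕜 (T x) x)| ≤ C * ‖x‖ ^ 2) : ‖T‖ ≤ C := by
  rw [T.norm_eq_iSup_rayleighQuotient hT]
  refine ciSup_le fun x ↦ ?_
  rcases eq_or_ne x 0 with rfl | hx
  · simpa using hC
  · rw [rayleighQuotient, reApplyInnerSelf_apply, abs_div, abs_sq, div_le_iff₀ (by positivity)]
    exact h x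

theorem matrixSpectralNorm_le_of_posSemidef {n : ℕ} {A : Matrix (Fin n) (Fin n) ℝ}
    (hA : A.PosSemidef) {C : ℝ} (hC : 0 ≤ C) (h : ∀ x, x ⬝ᵥ A *ᵥ x ≤ C * ∑ i, x i ^ 2) :
    matrixSpectralNorm A ≤ C := by
  refine ContinuousLinearMap.norm_le_of_abs_re_inner_self_le
    (isSymmetric_toEuclideanLin_iff.mpr hA.isHermitian) hC fun x ↦ ?_
  have hx := hA.dotProduct_mulVec_nonneg (WithLp.ofLp x)
  rw [star_trivial] at hx
  simpa [EuclideanSpace.real_norm_sq_eq, EuclideanSpace.inner_eq_star_dotProduct,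
    abs_of_nonneg hx] using h (WithLp.ofLp x)

section WeightedVariance

variable {ι : Type*} [Fintype ι] {p : ι → ℝ}

theorem dotProduct_diagonal_sub_vecMulVec_mulVec [DecidableEq ι] (p x : ι → ℝ) :
    x ⬝ᵥ (diagonal p - vecMulVec p p) *ᵥ x = ∑ i, p i * x i ^ 2 - (∑ i, p i * x i) ^ 2 := by
  rw [sub_mulVec, dotProduct_sub, sq, sum_mul_sum]
  congr 1
  · simp only [dotProduct, mulVec_diagonal]
    exact sum_congr rfl fun i _ ↦ by ring
  · simp only [dotProduct, mulVec, vecMulVec_apply, mul_sum]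
    exact sum_congr rfl fun i _ ↦ sum_congr rfl fun j _ ↦ by ring

theorem posSemidef_diagonal_sub_vecMulVec [DecidableEq ι] (hp : ∀ i, 0 ≤ p i)
    (hsum : ∑ i, p i ≤ 1) : (diagonal p - vecMulVec p p).PosSemidef := by
  refine .of_dotProduct_mulVec_nonneg ((isHermitian_diagonal p).sub <| by simp [IsHermitian])
    fun x ↦ ?_
  have hpx : 0 ≤ ∑ i, p i * x i ^ 2 := sum_nonneg fun i _ ↦ mul_nonneg (hp i) (sq_nonneg _)
  rw [star_trivial, dotProduct_diagonal_sub_vecMulVec_mulVec, sub_nonneg]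
  calc (∑ i, p i * x i) ^ 2 ≤ (∑ i, p i) * ∑ i, p i * x i ^ 2 :=
        sum_sq_le_sum_mul_sum_of_sq_le_mul _ (fun i _ ↦ hp i)
          (fun i _ ↦ mul_nonneg (hp i) (sq_nonneg _)) fun i _ ↦ le_of_eq (by ring)
    _ ≤ ∑ i, p i * x i ^ 2 := mul_le_of_le_one_left hpx hsum

theorem sum_mul_sq_sub_sq_sum_le (hp : ∀ i, 0 ≤ p i) (hsum : ∑ i, p i = 1) (x : ι → ℝ) :
    ∑ i, p i * x i ^ 2 - (∑ i, p i * x i) ^ 2 ≤ ∑ i, 2 * p i * (1 - p i) * x i ^ 2 := by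
  have hdiag_le : ∑ i, p i * p i * (x i + x i) ^ 2 ≤ ∑ i, ∑ j, p i * p j * (x i + x j) ^ 2 :=
    sum_le_sum fun i _ ↦ single_le_sum (f := fun j ↦ p i * p j * (x i + x j) ^ 2)
      (fun j _ ↦ by have := hp i; have := hp j; positivity) (mem_univ i)
  have hrow : ∀ i, ∑ j, p i * p j * (x i + x j) ^ 2 = p i * x i ^ 2 * ∑ j, p j +
      p i * x i * (2 * ∑ j, p j * x j) + p i * ∑ j, p j * x j ^ 2 := fun i ↦ by
    simp only [mul_sum, ← sum_add_distrib]
    exact sum_congr rfl fun j _ ↦ by ring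
  have hfull : ∑ i, ∑ j, p i * p j * (x i + x j) ^ 2 =
      2 * (∑ i, p i * x i ^ 2 + (∑ i, p i * x i) ^ 2) := by
    simp only [hrow, sum_add_distrib, ← sum_mul, hsum]
    ring
  have hdiag : ∑ i, p i * p i * (x i + x i) ^ 2 = 4 * ∑ i, p i ^ 2 * x i ^ 2 := by
    rw [mul_sum]
    exact sum_congr rfl fun i _ ↦ by ring
  have hrhs : ∑ i, 2 * p i * (1 - p i) * x i ^ 2 =
      2 * ∑ i, p i * x i ^ 2 - 2 * ∑ i, p i ^ 2 * x i ^ 2 := by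
    rw [mul_sum, mul_sum, ← sum_sub_distrib]
    exact sum_congr rfl fun i _ ↦ by ring
  linarith

theorem two_mul_mul_one_sub_le_one_sub_sum_sq (hp : ∀ i, 0 ≤ p i) (hsum : ∑ i, p i = 1)
    (i : ι) : 2 * p i * (1 - p i) ≤ 1 - ∑ j, p j ^ 2 := by
  classical
  have hrest : ∑ j ∈ univ.erase i, p j = 1 - p i := by
    rw [sum_erase_eq_sub (mem_univ i), hsum]
  have hrest_sq := sum_sq_le_sq_sum_of_nonneg (s := univ.erase i) fun j _ ↦ hp j
  rw [hrest] at hrest_sq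
  rw [← add_sum_erase _ _ (mem_univ i)]
  linarith

theorem one_sub_sum_sq_nonneg (hp : ∀ i, 0 ≤ p i) (hsum : ∑ i, p i = 1) :
    0 ≤ 1 - ∑ i, p i ^ 2 := by
  have := sum_sq_le_sq_sum_of_nonneg (s := univ) fun i _ ↦ hp i
  rw [hsum] at this
  linarith

theorem dotProduct_diagonal_sub_vecMulVec_mulVec_le [DecidableEq ι] (hp : ∀ i, 0 ≤ p i)
    (hsum : ∑ i, p i = 1) (x : ι → ℝ) :
    x ⬝ᵥ (diagonal p - vecMulVec p p) *ᵥ x ≤ (1 - ∑ i, p i ^ 2) * ∑ i, x i ^ 2 := by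
  rw [dotProduct_diagonal_sub_vecMulVec_mulVec, mul_sum]
  refine (sum_mul_sq_sub_sq_sum_le hp hsum x).trans (sum_le_sum fun i _ ↦ ?_)
  gcongr
  exact two_mul_mul_one_sub_le_one_sub_sum_sq hp hsum i

end WeightedVariance

theorem spectralNorm_covMatrix_le {n : ℕ} (p : Fin n → ℝ)
    (hp : ∀ i, 0 ≤ p i) (hsum : ∑ i, p i = 1) :
    matrixSpectralNorm (Matrix.diagonal p - Matrix.vecMulVec p p) ≤
      1 - ∑ i, (p i) ^ 2 :=
  matrixSpectralNorm_le_of_posSemidef (posSemidef_diagonal_sub_vecMulVec hp hsum.le)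
    (one_sub_sum_sq_nonneg hp hsum) (dotProduct_diagonal_sub_vecMulVec_mulVec_le hp hsum)
end

section
/- Let p : Fin n → ℝ be a probability vector and ε ≥ 0. If the Shannon entropy satisfies H(p) ≤ ε, then the spectral norm of S(p) = diagonal(p) − p pᵀ satisfies ‖S(p)‖₂ ≤ ε. -/
open Real Finset

theorem mul_one_sub_le_negMulLog {x : ℝ} (hx : 0 ≤ x) : x * (1 - x) ≤ negMulLog x := by
  rcases hx.eq_or_lt with rfl | hx
  · simp
  · rw [negMulLog, neg_mul, ← mul_neg]
    exact mul_le_mul_of_nonneg_left (by linarith [log_le_sub_one_of_pos hx]) hx.le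

theorem matrixSpectralNorm_le_of_sum_sq_le {m n : ℕ} (A : Matrix (Fin m) (Fin n) ℝ) {c : ℝ}
    (hc : 0 ≤ c) (hA : ∑ i, ∑ j, A i j ^ 2 ≤ c ^ 2) : matrixSpectralNorm A ≤ c := by
  refine ContinuousLinearMap.opNorm_le_bound _ hc fun x => ?_
  refine pow_le_pow_iff_left₀ (by positivity) (by positivity) two_ne_zero |>.mp ?_
  rw [mul_pow, EuclideanSpace.norm_sq_eq, EuclideanSpace.norm_sq_eq]
  simp only [LinearMap.coe_toContinuousLinearMap', Matrix.toLpLin_apply,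
    Matrix.mulVec, dotProduct, norm_eq_abs, sq_abs]
  calc ∑ i, (∑ j, A i j * x j) ^ 2
      ≤ ∑ i, (∑ j, A i j ^ 2) * ∑ j, x j ^ 2 :=
        sum_le_sum fun i _ => sum_mul_sq_le_sq_mul_sq _ _ _
    _ = (∑ i, ∑ j, A i j ^ 2) * ∑ j, x j ^ 2 := by rw [sum_mul]
    _ ≤ c ^ 2 * ∑ j, x j ^ 2 := by gcongr

theorem sq_covMatrix_apply_le {ι : Type*} [Fintype ι] [DecidableEq ι] {p : ι → ℝ}
    (hp : ∀ i, 0 ≤ p i) (hsum : ∑ i, p i ≤ 1) (i j : ι) :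
    (Matrix.diagonal p - Matrix.vecMulVec p p) i j ^ 2
      ≤ p i * (1 - p i) * (p j * (1 - p j)) := by
  simp only [Matrix.sub_apply, Matrix.diagonal_apply, Matrix.vecMulVec_apply]
  split_ifs with hij
  · subst hij
    exact (by ring : (p i - p i * p i) ^ 2 = _).le
  · have hpair : p i + p j ≤ 1 :=
      (add_le_sum (fun k _ => hp k) (mem_univ i) (mem_univ j) hij).trans hsum
    have hi : p i ≤ 1 - p j := by linarith
    have hj : p j ≤ 1 - p i := by linarith
    calc (0 - p i * p j) ^ 2 = p i * p j * (p j * p i) := by ring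
      _ ≤ p i * (1 - p i) * (p j * (1 - p j)) :=
        mul_le_mul (mul_le_mul_of_nonneg_left hj (hp i)) (mul_le_mul_of_nonneg_left hi (hp j))
          (mul_nonneg (hp j) (hp i)) (mul_nonneg (hp i) (by linarith [hp j]))

theorem spectralNorm_covMatrix_le_of_entropy_le_general {n : ℕ} (p : Fin n → ℝ)
    (hp : ∀ i, 0 ≤ p i) (hsum : ∑ i, p i = 1) (ε : ℝ)
    (hH : ∑ i, Real.negMulLog (p i) ≤ ε) :
    matrixSpectralNorm (Matrix.diagonal p - Matrix.vecMulVec p p) ≤ ε := by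
  have hp_le_one : ∀ i, p i ≤ 1 := fun i =>
    (single_le_sum (fun j _ => hp j) (mem_univ i)).trans hsum.le
  have hq : ∀ i, 0 ≤ p i * (1 - p i) := fun i => mul_nonneg (hp i) (by linarith [hp_le_one i])
  have hfrob : ∑ i, ∑ j, (Matrix.diagonal p - Matrix.vecMulVec p p) i j ^ 2
      ≤ (∑ i, p i * (1 - p i)) ^ 2 := by
    rw [sq, sum_mul_sum]
    exact sum_le_sum fun i _ => sum_le_sum fun j _ => sq_covMatrix_apply_le hp hsum.le i j
  calc matrixSpectralNorm (Matrix.diagonal p - Matrix.vecMulVec p p)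
      ≤ ∑ i, p i * (1 - p i) :=
        matrixSpectralNorm_le_of_sum_sq_le _ (sum_nonneg fun i _ => hq i) hfrob
    _ ≤ ∑ i, negMulLog (p i) := sum_le_sum fun i _ => mul_one_sub_le_negMulLog (hp i)
    _ ≤ ε := hH

theorem spectralNorm_covMatrix_le_of_entropy_le {n : ℕ} (p : Fin n → ℝ)
    (hp : ∀ i, 0 ≤ p i) (hsum : ∑ i, p i = 1) (ε : ℝ) (hε : 0 ≤ ε)
    (hH : ∑ i, Real.negMulLog (p i) ≤ ε) :
    matrixSpectralNorm (Matrix.diagonal p - Matrix.vecMulVec p p) ≤ ε :=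
  spectralNorm_covMatrix_le_of_entropy_le_general p hp hsum ε hH
end

section
/- There exists an absolute constant C > 0 such that for every d ≥ 1 and every δ ∈ (0, 1), if W : Matrix (Fin d) (Fin d) ℝ is a random matrix whose entries are independent Gaussian random variables with mean 0 and variance 2/d (i.e., W is distributed according to the product measure ⨂ gaussianReal 0 (2/d) over the d² entries), then with probability at least 1 − δ the spectral norm satisfies ‖W‖₂ ≤ C * (1 + Real.sqrt (Real.log (1/δ) / d)). -/
/-!
Take 1/2-nets of the unit balls of the domain and the codomain, each with at most 5^dim points
(maximal 1/2-separated sets, counted by volume). A vector is at most twice its largest inner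
product with a point of such a net, so ‖W‖ ≤ 4 · max ⟪W w, u⟫ over net points u, w. Each
⟪W w, u⟫ = ∑ uᵢ wⱼ Wᵢⱼ is a centred Gaussian of variance at most v = 2/d, so a union bound
gives P(‖W‖ > 4t) ≤ 25^d exp(-t² d / 4), and t = 4 (1 + √(log(1/δ)/d)) makes this at most δ
because 25 ≤ e⁴.
-/

open ProbabilityTheory MeasureTheory

open Real Metric Module RealInnerProductSpace
open scoped NNReal ENNReal

namespace ProbabilityTheory

lemma HasSubgaussianMGF.mono {Ω : Type*} {mΩ : MeasurableSpace Ω} {μ : Measure Ω} {X : Ω → ℝ}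
    {c c' : ℝ≥0} (h : HasSubgaussianMGF X c μ) (hc : c ≤ c') : HasSubgaussianMGF X c' μ where
  integrable_exp_mul := h.integrable_exp_mul
  mgf_le t := (h.mgf_le t).trans <| exp_le_exp.2 <| by gcongr

lemma hasSubgaussianMGF_id_gaussianReal (v : ℝ≥0) : HasSubgaussianMGF id v (gaussianReal 0 v) where
  integrable_exp_mul := integrable_exp_mul_gaussianReal
  mgf_le t := by simp [mgf_id_gaussianReal]

lemma measureReal_pi_gaussianReal_le_sum_mul_le {ι : Type*} [Fintype ι] (v : ℝ≥0) {c : ι → ℝ}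
    (hc : ∑ i, c i ^ 2 ≤ 1) {t : ℝ} (ht : 0 ≤ t) :
    (Measure.pi fun _ : ι => gaussianReal 0 v).real {g | t ≤ ∑ i, c i * g i} ≤
      exp (-t ^ 2 / (2 * v)) := by
  have h_coord (i : ι) :
      HasSubgaussianMGF (fun g : ι → ℝ => g i) v (Measure.pi fun _ : ι => gaussianReal 0 v) := by
    rw [← HasSubgaussianMGF.id_map_iff (measurable_pi_apply i).aemeasurable,
      (measurePreserving_eval _ i).map_eq]
    exact hasSubgaussianMGF_id_gaussianReal v
  have h_sum := HasSubgaussianMGF.sum_of_iIndepFun (s := Finset.univ)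
    (iIndepFun_pi (μ := fun _ : ι => gaussianReal 0 v) (X := fun i x => c i * x)
      fun i => by fun_prop) fun i _ => (h_coord i).const_mul (c i)
  refine (h_sum.mono ?_).measure_ge_le ht
  rw [← NNReal.coe_le_coe, NNReal.coe_sum]
  change ∑ i, c i ^ 2 * (v : ℝ) ≤ v
  rw [← Finset.sum_mul]
  exact mul_le_of_le_one_left v.2 hc

end ProbabilityTheory

lemma Metric.IsCover.exists_dist_le {X : Type*} [PseudoMetricSpace X] {ε : ℝ≥0} {s N : Set X}
    (hN : IsCover ε s N) {x : X} (hx : x ∈ s) : ∃ y ∈ N, dist x y ≤ ε := by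
  simpa using hN.subset_iUnion_closedBall hx

section Net

variable {E F : Type*} [NormedAddCommGroup E] [NormedSpace ℝ E]
  [NormedAddCommGroup F] [InnerProductSpace ℝ F]

lemma Metric.IsSeparated.encard_le_of_subset_closedBall [FiniteDimensional ℝ E] {C : Set E}
    (hC : C ⊆ closedBall 0 1) (hsep : IsSeparated ((1 / 2 : ℝ≥0) : ℝ≥0∞) C) :
    C.encard ≤ 5 ^ finrank ℝ E := by
  classical
  have h_finset (s : Finset E) (hs : ↑s ⊆ C) : s.card ≤ 5 ^ finrank ℝ E := by
    rw [← s.card_image_of_injective (smul_right_injective E (two_ne_zero' ℝ))]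
    refine Besicovitch.card_le_of_separated _ ?_ ?_
    · simp only [Finset.forall_mem_image]
      intro x hx
      have := mem_closedBall_zero_iff.1 (hC (hs hx))
      rw [norm_smul, Real.norm_two]
      linarith
    · simp only [Finset.forall_mem_image]
      intro x hx y hy hxy
      have : ((1 / 2 : ℝ≥0) : ℝ≥0∞) < edist x y :=
        hsep (hs hx) (hs hy) (ne_of_apply_ne (2 • ·) hxy)
      rw [edist_nndist, ENNReal.coe_lt_coe, ← NNReal.coe_lt_coe, coe_nndist] at this
      rw [← smul_sub, norm_smul, Real.norm_two, ← dist_eq_norm]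
      norm_num at this
      linarith
  have hCfin : C.Finite := by
    by_contra hinf
    obtain ⟨s, hs, hcard⟩ := Set.Infinite.exists_subset_card_eq hinf (5 ^ finrank ℝ E + 1)
    have := h_finset s hs
    omega
  rw [hCfin.encard_eq_coe_toFinset_card]
  exact_mod_cast h_finset _ (by simp)

variable (E) in
lemma exists_finset_isCover_closedBall [FiniteDimensional ℝ E] :
    ∃ N : Finset E, ↑N ⊆ closedBall (0 : E) 1 ∧
      IsCover (1 / 2) (closedBall (0 : E) 1) ↑N ∧ N.card ≤ 5 ^ finrank ℝ E := by
  have h_packing : packingNumber (1 / 2) (closedBall (0 : E) 1) ≤ 5 ^ finrank ℝ E :=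
    iSup₂_le fun C hC => iSup_le fun hsep => hsep.encard_le_of_subset_closedBall hC
  have h_top : packingNumber (1 / 2) (closedBall (0 : E) 1) ≠ ⊤ :=
    ne_top_of_le_ne_top (by simp) h_packing
  have h_enc := encard_maximalSeparatedSet h_top
  have hfin : (maximalSeparatedSet (1 / 2) (closedBall (0 : E) 1)).Finite :=
    Set.finite_of_encard_le_coe (h_enc ▸ h_packing)
  refine ⟨hfin.toFinset, by simpa using maximalSeparatedSet_subset, by
    simpa using isCover_maximalSeparatedSet h_top, ?_⟩
  rw [hfin.encard_eq_coe_toFinset_card] at h_enc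
  exact_mod_cast h_enc ▸ h_packing

lemma norm_le_two_mul_of_isCover {N : Set F} (hN : IsCover (1 / 2) (closedBall 0 1) N) {w : F}
    {m : ℝ} (hw : ∀ u ∈ N, ⟪w, u⟫ ≤ m) : ‖w‖ ≤ 2 * m := by
  obtain ⟨y, hyN, hy⟩ := hN.exists_dist_le (x := ‖w‖⁻¹ • w) <| by
    rw [mem_closedBall_zero_iff, norm_smul, norm_inv, norm_norm]
    exact inv_mul_le_one
  have h_self : ⟪w, ‖w‖⁻¹ • w⟫ = ‖w‖ := by
    rw [real_inner_smul_right, real_inner_self_eq_norm_sq, sq, ← mul_assoc, inv_mul_mul_self]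
  have h_rest : ⟪w, ‖w‖⁻¹ • w - y⟫ ≤ ‖w‖ * (1 / 2) := by
    refine (real_inner_le_norm _ _).trans (mul_le_mul_of_nonneg_left ?_ (norm_nonneg w))
    simpa [dist_eq_norm] using hy
  have := hw y hyN
  rw [inner_sub_right, h_self] at h_rest
  linarith

lemma opNorm_le_four_mul_of_isCover {NE : Set E} {NF : Set F}
    (hNE : IsCover (1 / 2) (closedBall 0 1) NE) (hNF : IsCover (1 / 2) (closedBall 0 1) NF)
    (A : E →L[ℝ] F) {M : ℝ} (hM : ∀ u ∈ NF, ∀ v ∈ NE, ⟪A v, u⟫ ≤ M) : ‖A‖ ≤ 4 * M := by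
  have h_ball (x : E) (hx : x ∈ closedBall 0 1) : ‖A x‖ ≤ 2 * M + ‖A‖ * (1 / 2) := by
    obtain ⟨y, hyN, hy⟩ := hNE.exists_dist_le hx
    have h_near : ‖A y‖ ≤ 2 * M := norm_le_two_mul_of_isCover hNF fun u hu => hM u hu y hyN
    have h_far : ‖A (x - y)‖ ≤ ‖A‖ * (1 / 2) :=
      (A.le_opNorm _).trans <| mul_le_mul_of_nonneg_left (by simpa [dist_eq_norm] using hy)
        (norm_nonneg A)
    calc ‖A x‖ = ‖A y + A (x - y)‖ := by rw [map_sub, add_sub_cancel]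
      _ ≤ 2 * M + ‖A‖ * (1 / 2) := (norm_add_le _ _).trans (add_le_add h_near h_far)
  have h_nonneg : 0 ≤ 2 * M + ‖A‖ * (1 / 2) :=
    (norm_nonneg _).trans (h_ball 0 (mem_closedBall_self zero_le_one))
  have := A.opNorm_le_of_unit_norm h_nonneg fun x hx => h_ball x (by simp [hx])
  linarith

end Net

lemma inner_toEuclideanLin_of {m n : ℕ} (g : Fin m × Fin n → ℝ) (u : EuclideanSpace ℝ (Fin m))
    (w : EuclideanSpace ℝ (Fin n)) :
    ⟪Matrix.toEuclideanLin (Matrix.of fun i j => g (i, j)) w, u⟫ =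
      ∑ p : Fin m × Fin n, u p.1 * w p.2 * g p := by
  simp only [PiLp.inner_apply, RCLike.inner_apply, conj_trivial, Matrix.toLpLin_apply,
    Matrix.mulVec, dotProduct, Matrix.of_apply, Fintype.sum_prod_type, Finset.mul_sum]
  exact Finset.sum_congr rfl fun i _ => Finset.sum_congr rfl fun j _ => by ring

lemma sum_mul_sq_eq_norm_sq_mul_norm_sq {ι κ : Type*} [Fintype ι] [Fintype κ]
    (u : EuclideanSpace ℝ ι) (w : EuclideanSpace ℝ κ) :
    ∑ p : ι × κ, (u p.1 * w p.2) ^ 2 = ‖u‖ ^ 2 * ‖w‖ ^ 2 := by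
  simp only [EuclideanSpace.norm_sq_eq, Real.norm_eq_abs, sq_abs, Fintype.sum_prod_type,
    Finset.sum_mul_sum, mul_pow]

lemma five_pow_le_exp_two_mul (d : ℕ) : (5 : ℝ) ^ d ≤ exp (2 * d) := by
  rw [mul_comm, exp_nat_mul]
  gcongr
  linarith [quadratic_le_exp_of_nonneg (zero_le_two (α := ℝ))]

lemma measureReal_four_mul_lt_matrixSpectralNorm_le (m n : ℕ) (v : ℝ≥0) {t : ℝ} (ht : 0 ≤ t) :
    (Measure.pi fun _ : Fin m × Fin n => gaussianReal 0 v).real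
        {g | 4 * t < matrixSpectralNorm (Matrix.of fun i j => g (i, j))} ≤
      5 ^ m * 5 ^ n * exp (-t ^ 2 / (2 * v)) := by
  obtain ⟨NF, hNF_ball, hNF, hNF_card⟩ :=
    exists_finset_isCover_closedBall (EuclideanSpace ℝ (Fin m))
  obtain ⟨NE, hNE_ball, hNE, hNE_card⟩ :=
    exists_finset_isCover_closedBall (EuclideanSpace ℝ (Fin n))
  rw [finrank_euclideanSpace_fin] at hNF_card hNE_card
  set μ := Measure.pi fun _ : Fin m × Fin n => gaussianReal 0 v
  set bad : EuclideanSpace ℝ (Fin m) × EuclideanSpace ℝ (Fin n) → Set (Fin m × Fin n → ℝ) :=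
    fun q => {g | t ≤ ∑ p : Fin m × Fin n, q.1 p.1 * q.2 p.2 * g p}
  have h_cover : {g | 4 * t < matrixSpectralNorm (Matrix.of fun i j => g (i, j))} ⊆
      ⋃ q ∈ NF ×ˢ NE, bad q := by
    intro g hg
    by_contra h_good
    refine hg.not_ge <| opNorm_le_four_mul_of_isCover hNE hNF _ fun u hu w hw => ?_
    have : g ∉ bad (u, w) := fun h => h_good <| Set.mem_biUnion (Finset.mem_product.2 ⟨hu, hw⟩) h
    rw [LinearMap.coe_toContinuousLinearMap', inner_toEuclideanLin_of]
    exact (not_le.1 this).le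
  have h_bad (q) (hq : q ∈ NF ×ˢ NE) : μ.real (bad q) ≤ exp (-t ^ 2 / (2 * v)) := by
    obtain ⟨hu, hw⟩ := Finset.mem_product.1 hq
    refine measureReal_pi_gaussianReal_le_sum_mul_le v ?_ ht
    rw [sum_mul_sq_eq_norm_sq_mul_norm_sq]
    have hu_norm := mem_closedBall_zero_iff.1 (hNF_ball hu)
    have hw_norm := mem_closedBall_zero_iff.1 (hNE_ball hw)
    exact mul_le_one₀ (pow_le_one₀ (norm_nonneg _) hu_norm) (by positivity)
      (pow_le_one₀ (norm_nonneg _) hw_norm)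
  calc μ.real {g | 4 * t < matrixSpectralNorm (Matrix.of fun i j => g (i, j))}
      ≤ ∑ q ∈ NF ×ˢ NE, μ.real (bad q) :=
        (measureReal_mono h_cover (measure_ne_top _ _)).trans (measureReal_biUnion_finset_le _ _)
    _ ≤ (NF ×ˢ NE).card * exp (-t ^ 2 / (2 * v)) := by
        simpa using Finset.sum_le_sum h_bad
    _ ≤ 5 ^ m * 5 ^ n * exp (-t ^ 2 / (2 * v)) := by
        rw [Finset.card_product]
        gcongr
        exact_mod_cast Nat.mul_le_mul hNF_card hNE_card

lemma five_pow_mul_exp_le {d : ℕ} (hd : 0 < d) {δ : ℝ} (hδ0 : 0 < δ) (hδ1 : δ ≤ 1) :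
    (5 : ℝ) ^ d * 5 ^ d * exp (-(4 * (1 + √(log (1 / δ) / d))) ^ 2 / (2 * (2 / d))) ≤ δ := by
  have hd' : (0 : ℝ) < d := Nat.cast_pos.2 hd
  set L := log (1 / δ) with hL
  set R := √(L / d)
  have hR : d * R ^ 2 = L := by
    rw [sq_sqrt (div_nonneg (log_nonneg (one_le_one_div hδ0 hδ1)) hd'.le),
      mul_div_cancel₀ _ hd'.ne']
  have h_exponent : 4 * d + L ≤ (4 * (1 + R)) ^ 2 / (2 * (2 / d)) := by
    have : (4 * (1 + R)) ^ 2 / (2 * (2 / d)) = 4 * d * (1 + R) ^ 2 := by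
      field_simp
      ring
    rw [this]
    nlinarith [sqrt_nonneg (L / d)]
  calc (5 : ℝ) ^ d * 5 ^ d * exp (-(4 * (1 + R)) ^ 2 / (2 * (2 / d)))
      ≤ exp (2 * d) * exp (2 * d) * exp (-(4 * d + L)) := by
        gcongr
        · exact five_pow_le_exp_two_mul d
        · exact five_pow_le_exp_two_mul d
        · rw [neg_div]
          exact neg_le_neg h_exponent
    _ = exp (-L) := by
        rw [← exp_add, ← exp_add]
        ring_nf
    _ = δ := by rw [hL, one_div, log_inv, neg_neg, exp_log hδ0]

lemma ofReal_one_sub_le_of_measureReal_compl_le {Ω : Type*} [MeasurableSpace Ω] {μ : Measure Ω}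
    [IsProbabilityMeasure μ] {s : Set Ω} {δ : ℝ} (h : μ.real sᶜ ≤ δ) :
    ENNReal.ofReal (1 - δ) ≤ μ s := by
  rw [← ofReal_measureReal]
  refine ENNReal.ofReal_le_ofReal ?_
  have := measureReal_union_le (μ := μ) s sᶜ
  rw [Set.union_compl_self, probReal_univ] at this
  linarith

theorem gaussian_matrix_spectralNorm_bound :
    ∃ C : ℝ, 0 < C ∧ ∀ d : ℕ, 1 ≤ d → ∀ δ : ℝ, 0 < δ → δ < 1 →
      ENNReal.ofReal (1 - δ) ≤
        (Measure.pi fun _ : Fin d × Fin d => gaussianReal 0 (2 / d : NNReal))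
          {g : Fin d × Fin d → ℝ |
            matrixSpectralNorm (Matrix.of fun i j => g (i, j)) ≤
              C * (1 + Real.sqrt (Real.log (1 / δ) / d))} := by
  refine ⟨16, by norm_num, fun d hd δ hδ0 hδ1 => ofReal_one_sub_le_of_measureReal_compl_le ?_⟩
  have h_tail := measureReal_four_mul_lt_matrixSpectralNorm_le d d (2 / d : ℝ≥0)
    (t := 4 * (1 + √(log (1 / δ) / d))) (by positivity)
  rw [NNReal.coe_div, NNReal.coe_ofNat, NNReal.coe_natCast] at h_tail
  simp only [Set.compl_ofPred, not_le, show ∀ x : ℝ, 16 * x = 4 * (4 * x) from fun x => by ring]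
  exact h_tail.trans (five_pow_mul_exp_le hd hδ0 hδ1.le)
end
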